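/- For every integer k ≥ 1, ζ(k+1) − 1 = ∑_{n=k}^{∞} (-1)^{n-k} s(n,k) / ((n+1)! · n), where ζ is the Riemann zeta function. -/

import Mathlib

/-!
Write `c(n, k) = |s(n, k)|` for the coefficients of the rising factorial
`(x)ₙ = x (x + 1) ⋯ (x + n - 1)`. For `x ≥ 2` one has `∑ₙ c(n, k) / (x)ₙ₊₁ = x⁻⁽ᵏ⁺¹⁾`: the partial
sums telescope, the remainder after `n` terms being `Tₙ(x) / (xᵏ⁺¹ (x)ₙ)` where `Tₙ` is `(x)ₙ`
truncated at degree `k`, and it tends to `0` since `Tₙ(x) ≤ (k + 1) n! xᵏ` while `(x)ₙ ≥ (n + 1)!`.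
Taking `x = m + 2` and summing over `m` gives `ζ(k + 1) - 1`. Summing the same nonnegative double
series in the other order instead, the inner sum is `∑ₘ 1 / (m + 2)ₙ₊₁ = 1 / (n (n + 1)!)`, again
by telescoping.
-/

open scoped BigOperators

noncomputable def stirlingS1 (n k : ℕ) : ℝ :=
  (∏ i ∈ Finset.range n, (Polynomial.X - Polynomial.C (i : ℝ))).coeff k

open Finset Polynomial Filter Topology

theorem stirlingS1_succ_zero (n : ℕ) : stirlingS1 (n + 1) 0 = -n * stirlingS1 n 0 := by
  simp only [stirlingS1, prod_range_succ, mul_sub, coeff_sub, coeff_mul_X_zero, coeff_mul_C]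
  ring

theorem stirlingS1_succ_succ (n k : ℕ) :
    stirlingS1 (n + 1) (k + 1) = stirlingS1 n k - n * stirlingS1 n (k + 1) := by
  simp only [stirlingS1, prod_range_succ, mul_sub, coeff_sub, coeff_mul_X, coeff_mul_C]
  ring

theorem stirlingS1_eq_neg_one_pow_mul_stirlingFirst (n k : ℕ) :
    stirlingS1 n k = (-1) ^ (n + k) * n.stirlingFirst k := by
  induction n generalizing k with
  | zero => cases k <;> simp [stirlingS1, coeff_one]
  | succ n ih =>
    cases k with
    | zero => cases n <;> simp [stirlingS1_succ_zero, ih]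
    | succ k =>
      rw [stirlingS1_succ_succ, ih, ih, Nat.stirlingFirst_succ_succ]
      push_cast
      ring

theorem Nat.stirlingFirst_le_factorial (n k : ℕ) : n.stirlingFirst k ≤ n.factorial := by
  induction n generalizing k with
  | zero => cases k <;> simp
  | succ n ih =>
    cases k with
    | zero => simp
    | succ k =>
      rw [Nat.stirlingFirst_succ_succ, Nat.factorial_succ]
      nlinarith [ih k, ih (k + 1)]

theorem hasSum_of_sub_succ_eq {f g : ℕ → ℝ} {l : ℝ} (hg : ∀ n, 0 ≤ g n)
    (hfg : ∀ n, f n - f (n + 1) = g n) (hf : Tendsto f atTop (𝓝 l)) : HasSum g (f 0 - l) := by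
  rw [hasSum_iff_tendsto_nat_of_nonneg hg]
  simp only [← hfg, sum_range_sub']
  exact hf.const_sub (f 0)

theorem hasSum_colSums_of_hasSum_rowSums {α β : Type*} {F : α × β → ℝ} (hF : 0 ≤ F)
    {r : α → ℝ} {c : β → ℝ} {a : ℝ} (hr : ∀ i, HasSum (fun j ↦ F (i, j)) (r i))
    (hc : ∀ j, HasSum (fun i ↦ F (i, j)) (c j)) (ha : HasSum r a) : HasSum c a := by
  have hr_eq : (fun i ↦ ∑' j, F (i, j)) = r := funext fun i ↦ (hr i).tsum_eq
  have hF_sum : Summable F :=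
    (summable_prod_of_nonneg hF).2 ⟨fun i ↦ (hr i).summable, hr_eq ▸ ha.summable⟩
  have hFa : HasSum F a := by
    convert hF_sum.hasSum
    exact ha.unique (hF_sum.hasSum.prod_fiberwise hr)
  exact ((Equiv.prodComm β α).hasSum_iff.2 hFa).prod_fiberwise hc

theorem factorial_succ_le_ascPochhammer_eval {x : ℝ} (hx : 2 ≤ x) (n : ℕ) :
    ((n + 1).factorial : ℝ) ≤ (ascPochhammer ℝ n).eval x := by
  induction n with
  | zero => simp
  | succ n ih =>
    rw [ascPochhammer_succ_eval, Nat.factorial_succ, Nat.cast_mul, mul_comm]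
    have : ((n + 1 + 1 : ℕ) : ℝ) ≤ x + n := by push_cast; linarith
    exact mul_le_mul ih this (by positivity) ((Nat.cast_nonneg _).trans ih)

theorem one_le_ascPochhammer_eval {x : ℝ} (hx : 1 ≤ x) (n : ℕ) :
    1 ≤ (ascPochhammer ℝ n).eval x := by
  induction n with
  | zero => simp
  | succ n ih =>
    rw [ascPochhammer_succ_eval]
    nlinarith [(Nat.cast_nonneg n : (0 : ℝ) ≤ n)]

theorem le_ascPochhammer_eval {x : ℝ} (hx : 0 ≤ x) {n : ℕ} (hn : 1 ≤ n) :
    x ≤ (ascPochhammer ℝ n).eval x := by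
  obtain ⟨n, rfl⟩ := Nat.exists_eq_add_of_le' hn
  rw [ascPochhammer_succ_left, eval_mul, eval_X, eval_comp, eval_add, eval_X, eval_one]
  nlinarith [one_le_ascPochhammer_eval (x := x + 1) (by linarith) n]

noncomputable def ascPochhammerTrunc (k n : ℕ) (x : ℝ) : ℝ :=
  ∑ i ∈ range (k + 1), (n.stirlingFirst i : ℝ) * x ^ i

section Row

variable (k : ℕ) {x : ℝ}

theorem ascPochhammerTrunc_zero : ascPochhammerTrunc k 0 x = 1 := by
  simp [ascPochhammerTrunc, sum_range_succ']

theorem ascPochhammerTrunc_succ (n : ℕ) :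
    ascPochhammerTrunc k (n + 1) x =
      (x + n) * ascPochhammerTrunc k n x - x ^ (k + 1) * n.stirlingFirst k := by
  have h_low : ascPochhammerTrunc k n x =
      ∑ i ∈ range k, (n.stirlingFirst i : ℝ) * x ^ i + n.stirlingFirst k * x ^ k :=
    sum_range_succ _ k
  have h_high : ascPochhammerTrunc k n x =
      ∑ i ∈ range k, (n.stirlingFirst (i + 1) : ℝ) * x ^ (i + 1) + n.stirlingFirst 0 := by
    simp [ascPochhammerTrunc, sum_range_succ']
  have h_zero : (n : ℝ) * n.stirlingFirst 0 = 0 := by cases n <;> simp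
  have h_succ : ascPochhammerTrunc k (n + 1) x =
      n * ∑ i ∈ range k, (n.stirlingFirst (i + 1) : ℝ) * x ^ (i + 1) +
        x * ∑ i ∈ range k, (n.stirlingFirst i : ℝ) * x ^ i := by
    simp only [ascPochhammerTrunc, sum_range_succ', mul_sum, ← sum_add_distrib,
      Nat.stirlingFirst_succ_succ, Nat.stirlingFirst_succ_zero]
    push_cast
    simp only [zero_mul, add_zero]
    exact sum_congr rfl fun i _ ↦ by ring
  rw [h_succ]
  linear_combination -(n : ℝ) * h_high - x * h_low - h_zero

theorem ascPochhammerTrunc_nonneg (n : ℕ) (hx : 0 ≤ x) : 0 ≤ ascPochhammerTrunc k n x := by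
  unfold ascPochhammerTrunc
  positivity

theorem ascPochhammerTrunc_le (n : ℕ) (hx : 1 ≤ x) :
    ascPochhammerTrunc k n x ≤ (k + 1) * n.factorial * x ^ k :=
  calc ascPochhammerTrunc k n x ≤ ∑ _i ∈ range (k + 1), (n.factorial : ℝ) * x ^ k :=
        sum_le_sum fun i hi ↦ mul_le_mul (mod_cast n.stirlingFirst_le_factorial i)
          (pow_le_pow_right₀ hx (Nat.lt_succ_iff.1 (mem_range.1 hi))) (by positivity)
          (by positivity)
    _ = (k + 1) * n.factorial * x ^ k := by simp [mul_assoc]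

noncomputable def stirlingRemainder (k n : ℕ) (x : ℝ) : ℝ :=
  ascPochhammerTrunc k n x / (x ^ (k + 1) * (ascPochhammer ℝ n).eval x)

theorem stirlingRemainder_zero : stirlingRemainder k 0 x = 1 / x ^ (k + 1) := by
  simp [stirlingRemainder, ascPochhammerTrunc_zero]

theorem stirlingRemainder_sub_succ (hx : 0 < x) (n : ℕ) :
    stirlingRemainder k n x - stirlingRemainder k (n + 1) x =
      n.stirlingFirst k / (ascPochhammer ℝ (n + 1)).eval x := by
  have := ascPochhammer_pos n x hx
  have : 0 < x + n := by positivity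
  rw [stirlingRemainder, stirlingRemainder, ascPochhammerTrunc_succ, ascPochhammer_succ_eval]
  field_simp
  ring

theorem stirlingRemainder_le (hx : 2 ≤ x) (n : ℕ) :
    stirlingRemainder k n x ≤ (k + 1) * (1 / (n + 1)) :=
  calc stirlingRemainder k n x
      ≤ (k + 1) * n.factorial * x ^ k / (x ^ k * (n + 1).factorial) := by
        refine div_le_div₀ (by positivity) (ascPochhammerTrunc_le k n (by linarith))
          (by positivity) ?_
        rw [pow_succ, mul_assoc]
        gcongr
        calc ((n + 1).factorial : ℝ) = 1 * (n + 1).factorial := (one_mul _).symm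
          _ ≤ x * (ascPochhammer ℝ n).eval x := by
            gcongr
            · linarith
            · exact factorial_succ_le_ascPochhammer_eval hx n
    _ = (k + 1) * (1 / (n + 1)) := by
        rw [Nat.factorial_succ]
        push_cast
        field_simp

theorem tendsto_stirlingRemainder (hx : 2 ≤ x) :
    Tendsto (stirlingRemainder k · x) atTop (𝓝 0) := by
  refine squeeze_zero (fun n ↦ ?_) (stirlingRemainder_le k hx) ?_
  · have := ascPochhammer_pos n x (by linarith)
    exact div_nonneg (ascPochhammerTrunc_nonneg k n (by linarith)) (by positivity)
  · simpa using tendsto_one_div_add_atTop_nhds_zero_nat.const_mul ((k : ℝ) + 1)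

theorem hasSum_stirlingFirst_div_ascPochhammer (hx : 2 ≤ x) :
    HasSum (fun n ↦ n.stirlingFirst k / (ascPochhammer ℝ (n + 1)).eval x) (1 / x ^ (k + 1)) := by
  have hpos : 0 < x := by linarith
  simpa [stirlingRemainder_zero] using
    hasSum_of_sub_succ_eq (fun n ↦ div_nonneg (Nat.cast_nonneg _) (ascPochhammer_pos _ x hpos).le)
      (stirlingRemainder_sub_succ k hpos) (tendsto_stirlingRemainder k hx)

end Row

theorem ascPochhammer_eval_two (S : Type*) [Semiring S] (n : ℕ) :
    (ascPochhammer S n).eval 2 = (n + 1).factorial := by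
  simpa [one_add_one_eq_two, add_comm 1 n] using factorial_mul_ascPochhammer S 1 n

theorem hasSum_inv_ascPochhammer_eval_add {x : ℝ} (hx : 0 < x) {N : ℕ} (hN : 1 ≤ N) :
    HasSum (fun m : ℕ ↦ ((ascPochhammer ℝ (N + 1)).eval (m + x))⁻¹)
      ((N * (ascPochhammer ℝ N).eval x)⁻¹) := by
  have h_sub (y : ℝ) (hy : 0 < y) : (N * (ascPochhammer ℝ N).eval y)⁻¹ -
      (N * (ascPochhammer ℝ N).eval (y + 1))⁻¹ = ((ascPochhammer ℝ (N + 1)).eval y)⁻¹ := by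
    have h_right := ascPochhammer_succ_eval N y
    have h_left : (ascPochhammer ℝ (N + 1)).eval y = y * (ascPochhammer ℝ N).eval (y + 1) := by
      simp [ascPochhammer_succ_left, eval_comp]
    have hN0 : (N : ℝ) ≠ 0 := by positivity
    have hA := (ascPochhammer_pos N y hy).ne'
    have hB := (ascPochhammer_pos N (y + 1) (by positivity)).ne'
    have hP := (ascPochhammer_pos (N + 1) y hy).ne'
    field_simp
    linear_combination (ascPochhammer ℝ N).eval (y + 1) * h_right -
      (ascPochhammer ℝ N).eval y * h_left
  have h_tendsto : Tendsto (fun m : ℕ ↦ (N * (ascPochhammer ℝ N).eval (m + x))⁻¹) atTop (𝓝 0) := by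
    refine Tendsto.inv_tendsto_atTop (tendsto_atTop_mono (fun m ↦ ?_)
      (tendsto_atTop_add_const_right _ x tendsto_natCast_atTop_atTop))
    have h_le := le_ascPochhammer_eval (x := m + x) (by positivity) hN
    have : (1 : ℝ) ≤ N := by exact_mod_cast hN
    nlinarith
  simpa using hasSum_of_sub_succ_eq
    (fun m ↦ (inv_pos.2 (ascPochhammer_pos (N + 1) (m + x) (by positivity))).le)
    (fun m ↦ by rw [Nat.cast_succ, add_right_comm]; exact h_sub (m + x) (by positivity)) h_tendsto

theorem hasSum_stirlingFirst_div_factorial_mul {k : ℕ} (hk : 1 ≤ k) :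
    HasSum (fun n : ℕ ↦ (n.stirlingFirst k : ℝ) / ((n + 1).factorial * n))
      (∑' m : ℕ, 1 / ((m : ℝ) + 2) ^ (k + 1)) := by
  have h_rows (m : ℕ) : HasSum (fun n ↦ n.stirlingFirst k / (ascPochhammer ℝ (n + 1)).eval
      ((m : ℝ) + 2)) (1 / ((m : ℝ) + 2) ^ (k + 1)) :=
    hasSum_stirlingFirst_div_ascPochhammer k (by linarith [(Nat.cast_nonneg m : (0 : ℝ) ≤ m)])
  have h_cols (n : ℕ) : HasSum (fun m : ℕ ↦ n.stirlingFirst k / (ascPochhammer ℝ (n + 1)).eval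
      ((m : ℝ) + 2)) (n.stirlingFirst k / ((n + 1).factorial * n)) := by
    rcases Nat.eq_zero_or_pos n with rfl | hn
    · simp [Nat.stirlingFirst_eq_zero_of_lt hk]
    · simpa only [div_eq_mul_inv, ascPochhammer_eval_two, mul_comm (n : ℝ)] using
        (hasSum_inv_ascPochhammer_eval_add two_pos hn).mul_left (n.stirlingFirst k : ℝ)
  have h_tail : Summable fun m : ℕ ↦ 1 / ((m : ℝ) + 2) ^ (k + 1) := by
    simpa using (summable_nat_add_iff 2).2 (Real.summable_one_div_nat_pow.2 (by lia : 1 < k + 1))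
  exact hasSum_colSums_of_hasSum_rowSums
    (F := fun p : ℕ × ℕ ↦ p.2.stirlingFirst k / (ascPochhammer ℝ (p.2 + 1)).eval ((p.1 : ℝ) + 2))
    (fun p ↦ div_nonneg (Nat.cast_nonneg _) (ascPochhammer_pos _ _ (by positivity)).le)
    h_rows h_cols h_tail.hasSum

theorem riemannZeta_nat_add_one_sub_one {k : ℕ} (hk : 1 ≤ k) :
    riemannZeta (k + 1) - 1 = ((∑' m : ℕ, 1 / ((m : ℝ) + 2) ^ (k + 1) : ℝ) : ℂ) := by
  have h_summable : Summable fun n : ℕ ↦ 1 / ((n : ℝ) + 1) ^ (k + 1) := by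
    simpa using (summable_nat_add_iff 1).2 (Real.summable_one_div_nat_pow.2 (by lia : 1 < k + 1))
  have h_cpow (n : ℕ) :
      1 / ((n : ℂ) + 1) ^ ((k : ℂ) + 1) = ((1 / ((n : ℝ) + 1) ^ (k + 1) : ℝ) : ℂ) := by
    rw [show (k : ℂ) + 1 = ((k + 1 : ℕ) : ℂ) by push_cast; ring, Complex.cpow_natCast]
    push_cast
    ring
  rw [zeta_eq_tsum_one_div_nat_add_one_cpow (by simp; lia), tsum_congr h_cpow,
    ← Complex.ofReal_tsum, h_summable.tsum_eq_zero_add]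
  push_cast
  simp [add_assoc, one_add_one_eq_two]

theorem zeta_sub_one_eq_stirling_series (k : ℕ) (hk : 1 ≤ k) :
    riemannZeta ((k : ℂ) + 1) - 1 =
      ((∑' n : ℕ, (-1) ^ n * stirlingS1 (n + k) k /
        ((Nat.factorial (n + k + 1)) * (n + k)) : ℝ) : ℂ) := by
  have h_vanish : ∑ n ∈ range k, (n.stirlingFirst k : ℝ) / ((n + 1).factorial * n) = 0 :=
    sum_eq_zero fun n hn ↦ by simp [Nat.stirlingFirst_eq_zero_of_lt (mem_range.1 hn)]
  have h_shift := (hasSum_nat_add_iff k).2 (by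
    rw [h_vanish, add_zero]; exact hasSum_stirlingFirst_div_factorial_mul hk)
  rw [riemannZeta_nat_add_one_sub_one hk, ← h_shift.tsum_eq]
  congr 1
  refine tsum_congr fun n ↦ ?_
  rw [stirlingS1_eq_neg_one_pow_mul_stirlingFirst, ← mul_assoc, ← pow_add,
    show n + (n + k + k) = 2 * (n + k) by ring, pow_mul]
  push_cast
  norm_num
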